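/- If the social choice function f : Θ → X is strongly implementable, then there exists a payment scheme P : Θ → ℚⁿ such that the direct revelation mechanism Γ_(f,P) is incentive compatible and satisfies the selective elimination condition (every bad equilibrium of Γ_(f,P) can be selectively eliminated). -/

import Mathlib

variable {n : ℕ}

def expUtil {X : Type} {Θ S : Fin n → Type} [∀ i, Fintype (Θ i)]
    (V : Fin n → X → (∀ j, Θ j) → ℚ) (p : (∀ j, Θ j) → ℚ)
    (g : (∀ j, S j) → X) (P : (∀ j, S j) → Fin n → ℚ)
    (α : ∀ j, Θ j → S j) (i : Fin n) (t : Θ i) (s : S i) : ℚ :=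
  ∑ θ : ∀ j, Θ j,
    p (Function.update θ i t) *
      (V i (g (Function.update (fun j => α j (θ j)) i s)) (Function.update θ i t) +
        P (Function.update (fun j => α j (θ j)) i s) i)

def isEquilibrium {X : Type} {Θ S : Fin n → Type} [∀ i, Fintype (Θ i)]
    (V : Fin n → X → (∀ j, Θ j) → ℚ) (p : (∀ j, Θ j) → ℚ)
    (g : (∀ j, S j) → X) (P : (∀ j, S j) → Fin n → ℚ)
    (α : ∀ j, Θ j → S j) : Prop :=
  ∀ (i : Fin n) (t : Θ i) (s : S i),
    expUtil V p g P α i t s ≤ expUtil V p g P α i t (α i t)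

def stronglyImplements {X : Type} {Θ S : Fin n → Type} [∀ i, Fintype (Θ i)]
    (V : Fin n → X → (∀ j, Θ j) → ℚ) (p : (∀ j, Θ j) → ℚ)
    (g : (∀ j, S j) → X) (P : (∀ j, S j) → Fin n → ℚ)
    (f : (∀ j, Θ j) → X) : Prop :=
  (∃ α, isEquilibrium V p g P α) ∧
    ∀ α, isEquilibrium V p g P α → (fun θ : ∀ j, Θ j => g (fun j => α j (θ j))) = f

/-- The direct revelation mechanism `Γ_(f,P)` is incentive compatible: truthful reporting
is a Bayesian equilibrium. -/
def incentiveCompatible {X : Type} {Θ : Fin n → Type} [∀ i, Fintype (Θ i)]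
    (V : Fin n → X → (∀ j, Θ j) → ℚ) (p : (∀ j, Θ j) → ℚ)
    (f : (∀ j, Θ j) → X) (P : (∀ j, Θ j) → Fin n → ℚ) : Prop :=
  isEquilibrium V p f P (fun _ t => t)

/-- An equilibrium `α` of the direct revelation mechanism `Γ_(f,P)` can be selectively
eliminated: there are an agent `i`, an outcome function `h` and payments `P̄ᵢ` depending only
on the other agents' reports `θ₋ᵢ`, such that (1) for some type `θ̄ᵢ`, deviating to the flag
strictly improves on playing `α`; (2) for every type `θᵢ`, deviating to the flag under
truthful reporting of the others is not profitable. -/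
def canSelectivelyEliminate {X : Type} {Θ : Fin n → Type} [∀ i, Fintype (Θ i)]
    (V : Fin n → X → (∀ j, Θ j) → ℚ) (p : (∀ j, Θ j) → ℚ)
    (f : (∀ j, Θ j) → X) (P : (∀ j, Θ j) → Fin n → ℚ)
    (α : ∀ j, Θ j → Θ j) : Prop :=
  ∃ (i : Fin n) (h : (∀ j, Θ j) → X) (Pb : (∀ j, Θ j) → ℚ),
    (∀ θ θ' : ∀ j, Θ j, (∀ j, j ≠ i → θ j = θ' j) → h θ = h θ' ∧ Pb θ = Pb θ') ∧
    (∃ tb : Θ i,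
      (∑ θ : ∀ j, Θ j,
          p (Function.update θ i tb) *
            (V i (f (Function.update (fun j => α j (θ j)) i (α i tb)))
                (Function.update θ i tb) +
              P (Function.update (fun j => α j (θ j)) i (α i tb)) i)) <
        ∑ θ : ∀ j, Θ j,
          p (Function.update θ i tb) *
            (V i (h (fun j => α j (θ j))) (Function.update θ i tb) +
              Pb (fun j => α j (θ j)))) ∧
    (∀ t : Θ i,
      0 ≤ ∑ θ : ∀ j, Θ j,
        p (Function.update θ i t) *
          (V i (f (Function.update θ i t)) (Function.update θ i t) +
            P (Function.update θ i t) i -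
            V i (h θ) (Function.update θ i t) - Pb θ))

/-!
This is the revelation principle, carried out with its payments. Let `a` be an equilibrium of a
mechanism `(g, P)` that strongly implements `f`, so `f = g ∘ a`, and charge the direct mechanism
the payments `P ∘ a`. Any profile `α` of the direct mechanism then has the same expected
utilities as the profile `a ∘ α` of `(g, P)`; in particular truth-telling inherits the
equilibrium property of `a`. If `α` is a bad equilibrium, `a ∘ α` cannot be an equilibrium of
`(g, P)`, since strong implementation would force `f ∘ α = g ∘ a ∘ α = f`. So some agent `i` of
type `t` gains by deviating to a strategy `s` of `(g, P)`, and the flag "play `s` against `a`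
of the others' reports" eliminates `α`; it is unprofitable against truthful reports because
`a` is an equilibrium.
-/

theorem Function.update_eq_update_of_forall_ne {ι : Type*} [DecidableEq ι]
    {β : ι → Type*} {g g' : ∀ j, β j} {i : ι} (v : β i) (h : ∀ j, j ≠ i → g j = g' j) :
    Function.update g i v = Function.update g' i v := by
  funext j
  rcases eq_or_ne j i with rfl | hj
  · simp
  · simp [Function.update_of_ne hj, h j hj]

section RevelationPrinciple

variable {X : Type} {Θ S : Fin n → Type} [∀ i, Fintype (Θ i)]
  (V : Fin n → X → (∀ j, Θ j) → ℚ) (p : (∀ j, Θ j) → ℚ)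
  (g : (∀ j, S j) → X) (P : (∀ j, S j) → Fin n → ℚ) (a : ∀ j, Θ j → S j)

theorem expUtil_comp (α : ∀ j, Θ j → Θ j) (i : Fin n) (t s : Θ i) :
    expUtil V p (fun θ => g (fun j => a j (θ j))) (fun θ => P (fun j => a j (θ j))) α i t s =
      expUtil V p g P (fun j x => a j (α j x)) i t (a i s) := by
  simp only [expUtil, Function.apply_update]

theorem isEquilibrium_of_isEquilibrium_comp {α : ∀ j, Θ j → Θ j}
    (h : isEquilibrium V p g P (fun j x => a j (α j x))) :
    isEquilibrium V p (fun θ => g (fun j => a j (θ j))) (fun θ => P (fun j => a j (θ j))) α := by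
  intro i t s
  rw [expUtil_comp, expUtil_comp]
  exact h i t (a i s)

theorem incentiveCompatible_comp (ha : isEquilibrium V p g P a) :
    incentiveCompatible V p (fun θ => g (fun j => a j (θ j)))
      (fun θ => P (fun j => a j (θ j))) :=
  isEquilibrium_of_isEquilibrium_comp V p g P a ha

theorem expUtil_sub_expUtil_eq_sum (i : Fin n) (t : Θ i) (s : S i) :
    expUtil V p g P a i t (a i t) - expUtil V p g P a i t s =
      ∑ θ : ∀ j, Θ j,
        p (Function.update θ i t) *
          (V i (g (fun j => a j (Function.update θ i t j))) (Function.update θ i t) +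
            P (fun j => a j (Function.update θ i t j)) i -
            V i (g (Function.update (fun j => a j (θ j)) i s)) (Function.update θ i t) -
            P (Function.update (fun j => a j (θ j)) i s) i) := by
  simp only [expUtil, ← Finset.sum_sub_distrib, Function.apply_update]
  refine Finset.sum_congr rfl fun θ _ => ?_
  ring

theorem canSelectivelyEliminate_of_lt_expUtil (ha : isEquilibrium V p g P a)
    {α : ∀ j, Θ j → Θ j} (i : Fin n) (t : Θ i) (s : S i)
    (hs : expUtil V p g P (fun j x => a j (α j x)) i t (a i (α i t)) <
      expUtil V p g P (fun j x => a j (α j x)) i t s) :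
    canSelectivelyEliminate V p (fun θ => g (fun j => a j (θ j)))
      (fun θ => P (fun j => a j (θ j))) α := by
  refine ⟨i, fun θ => g (Function.update (fun j => a j (θ j)) i s),
    fun θ => P (Function.update (fun j => a j (θ j)) i s) i, ?_, ⟨t, ?_⟩, fun t' => ?_⟩
  · intro θ θ' hθ
    have hupd := Function.update_eq_update_of_forall_ne s fun j hj => congrArg (a j) (hθ j hj)
    exact ⟨congrArg g hupd, congrArg (P · i) hupd⟩
  · simpa only [expUtil, Function.apply_update] using hs
  · rw [← expUtil_sub_expUtil_eq_sum]
    exact sub_nonneg.mpr (ha i t' s)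

end RevelationPrinciple

/-- If `f` is strongly implementable, then there is a payment scheme `P` such that the direct
revelation mechanism `Γ_(f,P)` is incentive compatible and satisfies the selective
elimination condition. -/
theorem strongly_implementable_selective_elimination {X : Type} {Θ : Fin n → Type}
    [∀ i, Fintype (Θ i)]
    (V : Fin n → X → (∀ j, Θ j) → ℚ) (p : (∀ j, Θ j) → ℚ) (f : (∀ j, Θ j) → X)
    (h : ∃ (S : Fin n → Type) (g : (∀ j, S j) → X) (P : (∀ j, S j) → Fin n → ℚ),
      stronglyImplements V p g P f) :
    ∃ P : (∀ j, Θ j) → Fin n → ℚ,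
      incentiveCompatible V p f P ∧
        ∀ α : ∀ j, Θ j → Θ j, isEquilibrium V p f P α →
          (fun θ : ∀ j, Θ j => f (fun j => α j (θ j))) ≠ f →
          canSelectivelyEliminate V p f P α := by
  obtain ⟨S, g, P, ⟨a, ha⟩, hunique⟩ := h
  obtain rfl := hunique a ha
  refine ⟨fun θ => P (fun j => a j (θ j)), incentiveCompatible_comp V p g P a ha, ?_⟩
  intro α _ hbad
  have hnot : ¬ isEquilibrium V p g P (fun j x => a j (α j x)) :=
    fun hαa => hbad (hunique _ hαa)
  simp only [isEquilibrium, not_forall, not_le] at hnot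
  obtain ⟨i, t, s, hs⟩ := hnot
  exact canSelectivelyEliminate_of_lt_expUtil V p g P a ha i t s hs
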